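/- Let E be a Banach space and 1 ≤ q ≤ p < ∞. If x = (x_j)_{j=1}^∞ is a mid (q,p)-summable sequence in E, then the operator Ψ_x : E* → ℓ_q defined by Ψ_x(x*) = (x*(x_j))_{j=1}^∞ is absolutely p-summing and π_p(Ψ_x) ≤ ‖(x_j)‖_{q,p}. -/

import Mathlib

/-!
For a finite family `z` in `E*`, `‖Ψ_x z_i‖` is the `ℓ_q`-norm of `(z_i(x_j))_j`, so Minkowski's
inequality in `ℓ_{p/q}` bounds `(∑_i ‖Ψ_x z_i‖^p)^{1/p}` by the `ℓ_q(ℓ_p)`-norm of the matrix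
`(z_i(x_j))`. Padding `z` by zeros, this is the expression whose supremum defines `‖x‖_{q,p}`,
evaluated at a weakly `p`-summable sequence; by homogeneity it is at most `‖x‖_{q,p}` times the
weak `p`-norm of `z`, which is the supremum on the right of the `p`-summing inequality. The
supremum defining `‖x‖_{q,p}` is finite by a gluing argument, and `Ψ_x` is continuous by the
closed graph theorem.
-/

open NormedSpace MeasureTheory

noncomputable section

/-- A sequence `x` in `E` is weakly `p`-summable: `∑_j |φ(x_j)|^p < ∞` for all `φ ∈ E*`. -/
def WeaklySummable (𝕜 : Type*) [RCLike 𝕜] {E : Type*} [NormedAddCommGroup E]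
    [NormedSpace 𝕜 E] (p : ℝ) (x : ℕ → E) : Prop :=
  ∀ φ : StrongDual 𝕜 E, Summable fun j => ‖φ (x j)‖ ^ p

/-- The weak `p`-norm of a sequence: `sup_{φ ∈ B_{E*}} (∑_j |φ(x_j)|^p)^{1/p}`. -/
def weakNorm (𝕜 : Type*) [RCLike 𝕜] {E : Type*} [NormedAddCommGroup E]
    [NormedSpace 𝕜 E] (p : ℝ) (x : ℕ → E) : ℝ :=
  ⨆ φ : {φ : StrongDual 𝕜 E // ‖φ‖ ≤ 1}, (∑' j, ‖φ.1 (x j)‖ ^ p) ^ (1 / p)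

/-- A sequence `x` in `E` is mid `(q,p)`-summable:
`∑_j (∑_n |x_n^*(x_j)|^p)^{q/p} < ∞` for every weakly `p`-summable sequence `(x_n^*)` in `E*`. -/
def MidSummable (𝕜 : Type*) [RCLike 𝕜] {E : Type*} [NormedAddCommGroup E]
    [NormedSpace 𝕜 E] (q p : ℝ) (x : ℕ → E) : Prop :=
  ∀ xs : ℕ → StrongDual 𝕜 E, WeaklySummable 𝕜 p xs →
    Summable fun j => (∑' n, ‖xs n (x j)‖ ^ p) ^ (q / p)

/-- The mid `(q,p)`-norm:
`sup over (x_n^*) in the closed unit ball of ℓ_p^w(E*)` of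
`(∑_j (∑_n |x_n^*(x_j)|^p)^{q/p})^{1/q}`. -/
def midNorm (𝕜 : Type*) [RCLike 𝕜] {E : Type*} [NormedAddCommGroup E]
    [NormedSpace 𝕜 E] (q p : ℝ) (x : ℕ → E) : ℝ :=
  ⨆ xs : {xs : ℕ → StrongDual 𝕜 E // WeaklySummable 𝕜 p xs ∧ weakNorm 𝕜 p xs ≤ 1},
    (∑' j, (∑' n, ‖xs.1 n (x j)‖ ^ p) ^ (q / p)) ^ (1 / q)

/-- `u : X → Y` is absolutely `p`-summing: there is `C > 0` with
`(∑_{j=1}^k ‖u(x_j)‖^p)^{1/p} ≤ C sup_{φ ∈ B_{X*}} (∑_{j=1}^k |φ(x_j)|^p)^{1/p}`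
for all finite families. -/
def AbsolutelySumming (𝕜 : Type*) [RCLike 𝕜] {X Y : Type*} [NormedAddCommGroup X]
    [NormedSpace 𝕜 X] [NormedAddCommGroup Y] [NormedSpace 𝕜 Y] (p : ℝ)
    (u : X →L[𝕜] Y) : Prop :=
  ∃ C > 0, ∀ (k : ℕ) (z : Fin k → X),
    (∑ j, ‖u (z j)‖ ^ p) ^ (1 / p) ≤
      C * ⨆ φ : {φ : StrongDual 𝕜 X // ‖φ‖ ≤ 1}, (∑ j, ‖φ.1 (z j)‖ ^ p) ^ (1 / p)

/-- The `p`-summing norm `π_p(u)`: the least admissible constant. -/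
def piNorm (𝕜 : Type*) [RCLike 𝕜] {X Y : Type*} [NormedAddCommGroup X]
    [NormedSpace 𝕜 X] [NormedAddCommGroup Y] [NormedSpace 𝕜 Y] (p : ℝ)
    (u : X →L[𝕜] Y) : ℝ :=
  sInf {C : ℝ | 0 < C ∧ ∀ (k : ℕ) (z : Fin k → X),
    (∑ j, ‖u (z j)‖ ^ p) ^ (1 / p) ≤
      C * ⨆ φ : {φ : StrongDual 𝕜 X // ‖φ‖ ≤ 1}, (∑ j, ‖φ.1 (z j)‖ ^ p) ^ (1 / p)}

variable {𝕜 E F : Type*}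

open Filter Topology

section ClosedGraph

variable [RCLike 𝕜] {V : Type*} [NormedAddCommGroup V] [NormedSpace 𝕜 V] [CompleteSpace V]

theorem exists_clm_lp_of_memℓp {r : ENNReal} [Fact (1 ≤ r)] (f : ℕ → StrongDual 𝕜 V)
    (hf : ∀ v, Memℓp (fun j => f j v) r) :
    ∃ T : V →L[𝕜] lp (fun _ : ℕ => 𝕜) r, ∀ v j, T v j = f j v := by
  let L : V →ₗ[𝕜] lp (fun _ : ℕ => 𝕜) r :=
    { toFun := fun v => ⟨fun j => f j v, hf v⟩
      map_add' := fun v w => lp.ext <| funext fun j => map_add (f j) v w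
      map_smul' := fun c v => lp.ext <| funext fun j => map_smul (f j) c v }
  have hclosed : ∀ (u : ℕ → V) (v : V) (y : lp (fun _ : ℕ => 𝕜) r),
      Tendsto u atTop (𝓝 v) → Tendsto (L ∘ u) atTop (𝓝 y) → y = L v := by
    intro u v y hu hLu
    refine lp.ext <| funext fun j => tendsto_nhds_unique ?_ ((f j).continuous.tendsto v |>.comp hu)
    exact ((lp.evalCLM 𝕜 (fun _ : ℕ => 𝕜) r j).continuous.tendsto y).comp hLu
  exact ⟨ContinuousLinearMap.ofSeqClosedGraph hclosed, fun _ _ => rfl⟩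

end ClosedGraph

section Minkowski

variable {ι : Type*} [Fintype ι] {s : ℝ}

theorem Lp_finset_sum_le_of_nonneg (hs : 1 ≤ s) (f : ι → ℕ → ℝ) (hf : ∀ i j, 0 ≤ f i j)
    (T : Finset ℕ) :
    (∑ i, (∑ j ∈ T, f i j) ^ s) ^ (1 / s) ≤ ∑ j ∈ T, (∑ i, f i j ^ s) ^ (1 / s) := by
  classical
  induction T using Finset.induction_on with
  | empty =>
    simp [Real.zero_rpow (by linarith : s ≠ 0), Real.zero_rpow (by positivity : s⁻¹ ≠ 0)]
  | insert j T hj ih =>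
    simp only [Finset.sum_insert hj]
    exact (Real.Lp_add_le_of_nonneg _ hs (fun i _ => hf i j)
      fun i _ => Finset.sum_nonneg fun j _ => hf i j).trans (add_le_add_right ih _)

theorem Lp_tsum_le_of_nonneg (hs : 1 ≤ s) (f : ι → ℕ → ℝ) (hf : ∀ i j, 0 ≤ f i j)
    (hrow : ∀ i, Summable (f i)) (hsum : Summable fun j => (∑ i, f i j ^ s) ^ (1 / s)) :
    (∑ i, (∑' j, f i j) ^ s) ^ (1 / s) ≤ ∑' j, (∑ i, f i j ^ s) ^ (1 / s) := by
  have hs0 : 0 ≤ s := by linarith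
  have hterm : ∀ j, 0 ≤ (∑ i, f i j ^ s) ^ (1 / s) := fun j =>
    Real.rpow_nonneg (Finset.sum_nonneg fun i _ => Real.rpow_nonneg (hf i j) s) _
  refine le_of_tendsto (x := atTop) ?_ (Eventually.of_forall fun T =>
    (Lp_finset_sum_le_of_nonneg hs f hf T).trans (hsum.sum_le_tsum T fun j _ => hterm j))
  exact (tendsto_finsetSum _ fun i _ => (hrow i).hasSum.rpow_const (Or.inr hs0)).rpow_const
    (Or.inr (by positivity))

theorem Lp_Lq_le_Lq_Lp {p q : ℝ} (hq : 0 < q) (hqp : q ≤ p) (a : ι → ℕ → ℝ)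
    (ha : ∀ i j, 0 ≤ a i j) (hsum : Summable fun j => (∑ i, a i j ^ p) ^ (q / p)) :
    (∑ i, (∑' j, a i j ^ q) ^ (p / q)) ^ (1 / p) ≤
      (∑' j, (∑ i, a i j ^ p) ^ (q / p)) ^ (1 / q) := by
  have hp : 0 < p := hq.trans_le hqp
  have hpow : ∀ i j, (a i j ^ q) ^ (p / q) = a i j ^ p := fun i j => by
    rw [← Real.rpow_mul (ha i j), mul_div_cancel₀ _ hq.ne']
  have hrow : ∀ i, Summable fun j => a i j ^ q := fun i =>
    hsum.of_nonneg_of_le (fun j => Real.rpow_nonneg (ha i j) q) fun j => by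
      calc a i j ^ q = (a i j ^ p) ^ (q / p) := by
            rw [← Real.rpow_mul (ha i j), mul_div_cancel₀ _ hp.ne']
        _ ≤ (∑ i, a i j ^ p) ^ (q / p) :=
            Real.rpow_le_rpow (Real.rpow_nonneg (ha i j) p)
              (Finset.single_le_sum (fun i _ => Real.rpow_nonneg (ha i j) p) (Finset.mem_univ i))
              (by positivity)
  have hmink := Lp_tsum_le_of_nonneg ((one_le_div hq).mpr hqp) (fun i j => a i j ^ q)
    (fun i j => Real.rpow_nonneg (ha i j) q) hrow
  simp only [hpow, one_div_div] at hmink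
  have hlhs : 0 ≤ ∑ i, (∑' j, a i j ^ q) ^ (p / q) := Finset.sum_nonneg fun i _ =>
    Real.rpow_nonneg (tsum_nonneg fun j => Real.rpow_nonneg (ha i j) q) _
  calc (∑ i, (∑' j, a i j ^ q) ^ (p / q)) ^ (1 / p)
      = ((∑ i, (∑' j, a i j ^ q) ^ (p / q)) ^ (q / p)) ^ (1 / q) := by
        rw [← Real.rpow_mul hlhs]
        field_simp
    _ ≤ (∑' j, (∑ i, a i j ^ p) ^ (q / p)) ^ (1 / q) :=
        Real.rpow_le_rpow (Real.rpow_nonneg hlhs _) (hmink hsum) (by positivity)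

end Minkowski

section WeakNorm

variable [RCLike 𝕜] [NormedAddCommGroup E] [NormedSpace 𝕜 E] {p : ℝ}

theorem tsum_norm_smul_rpow [NormedAddCommGroup F] [NormedSpace 𝕜 F] {ι : Type*} (a : 𝕜)
    (f : ι → F) (p : ℝ) : ∑' i, ‖a • f i‖ ^ p = ‖a‖ ^ p * ∑' i, ‖f i‖ ^ p := by
  simp_rw [norm_smul, Real.mul_rpow (norm_nonneg a) (norm_nonneg _), tsum_mul_left]

theorem tsum_norm_smul_rpow_one_div [NormedAddCommGroup F] [NormedSpace 𝕜 F] {ι : Type*}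
    (a : 𝕜) (f : ι → F) (hp : p ≠ 0) :
    (∑' i, ‖a • f i‖ ^ p) ^ (1 / p) = ‖a‖ * (∑' i, ‖f i‖ ^ p) ^ (1 / p) := by
  rw [tsum_norm_smul_rpow, Real.mul_rpow (by positivity) (tsum_nonneg fun _ => by positivity),
    one_div, Real.rpow_rpow_inv (norm_nonneg a) hp]

theorem WeaklySummable.smul {xs : ℕ → E} (h : WeaklySummable 𝕜 p xs) (a : 𝕜) :
    WeaklySummable 𝕜 p (a • xs) := fun φ => by
  simpa only [Pi.smul_apply, map_smul, norm_smul, Real.mul_rpow (norm_nonneg a) (norm_nonneg _)]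
    using (h φ).mul_left (‖a‖ ^ p)

theorem WeaklySummable.summable_apply {xs : ℕ → StrongDual 𝕜 E} (h : WeaklySummable 𝕜 p xs)
    (y : E) : Summable fun n => ‖xs n y‖ ^ p :=
  h (NormedSpace.inclusionInDoubleDual 𝕜 E y)

theorem weakNorm_nonneg (xs : ℕ → E) : 0 ≤ weakNorm 𝕜 p xs :=
  Real.iSup_nonneg fun _ => by positivity

theorem weakNorm_smul (xs : ℕ → E) (a : 𝕜) (hp : p ≠ 0) :
    weakNorm 𝕜 p (a • xs) = ‖a‖ * weakNorm 𝕜 p xs := by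
  simp only [weakNorm, Real.mul_iSup_of_nonneg (norm_nonneg a), Pi.smul_apply, map_smul,
    tsum_norm_smul_rpow_one_div a _ hp]

theorem tsum_rpow_le_weakNorm_mul (hp : 1 ≤ p) {xs : ℕ → E} (h : WeaklySummable 𝕜 p xs)
    (φ : StrongDual 𝕜 E) : (∑' n, ‖φ (xs n)‖ ^ p) ^ (1 / p) ≤ weakNorm 𝕜 p xs * ‖φ‖ := by
  have hp0 : 0 < p := by linarith
  have : Fact (1 ≤ ENNReal.ofReal p) := ⟨ENNReal.one_le_ofReal.mpr hp⟩
  have htoReal : (ENNReal.ofReal p).toReal = p := ENNReal.toReal_ofReal hp0.le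
  obtain ⟨T, hT⟩ := exists_clm_lp_of_memℓp (r := ENNReal.ofReal p)
    (fun n => ContinuousLinearMap.apply 𝕜 𝕜 (xs n)) fun φ => memℓp_gen (by rw [htoReal]; exact h φ)
  have hnormT : ∀ φ, ‖T φ‖ = (∑' n, ‖φ (xs n)‖ ^ p) ^ (1 / p) := fun φ => by
    simp only [lp.norm_eq_tsum_rpow (htoReal ▸ hp0), htoReal, hT, ContinuousLinearMap.apply_apply]
  have hbdd : BddAbove (Set.range fun φ : {φ : StrongDual 𝕜 E // ‖φ‖ ≤ 1} =>
      (∑' n, ‖φ.1 (xs n)‖ ^ p) ^ (1 / p)) := by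
    refine ⟨‖T‖, ?_⟩
    rintro _ ⟨φ, rfl⟩
    exact hnormT φ.1 ▸ T.le_opNorm_of_le φ.2 |>.trans_eq (mul_one _)
  have hT_le : ‖T‖ ≤ weakNorm 𝕜 p xs :=
    T.opNorm_le_of_unit_norm (weakNorm_nonneg xs) fun φ hφ =>
      hnormT φ ▸ le_ciSup hbdd ⟨φ, hφ.le⟩
  exact hnormT φ ▸ (T.le_opNorm φ).trans (mul_le_mul_of_nonneg_right hT_le (norm_nonneg φ))

end WeakNorm

section FiniteFamilies

variable [RCLike 𝕜] [NormedAddCommGroup E] [NormedSpace 𝕜 E] {p : ℝ} {k : ℕ}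

theorem tsum_comp_extend_fin [Zero F] (z : Fin k → F) (g : F → ℝ) (hg : g 0 = 0) :
    ∑' n, g (Function.extend Fin.val z 0 n) = ∑ i, g (z i) := by
  have : g ∘ (0 : ℕ → F) = 0 := funext fun _ => hg
  simp only [Function.apply_extend g, this, tsum_extend_zero Fin.val_injective, tsum_fintype,
    Function.comp_apply]

theorem weaklySummable_extend_fin (z : Fin k → E) (hp : p ≠ 0) :
    WeaklySummable 𝕜 p (Function.extend Fin.val z 0) := fun φ => by
  refine summable_of_ne_finset_zero (s := Finset.range k) fun n hn => ?_
  rw [Function.extend_apply' _ _ _ fun ⟨i, hi⟩ => hn (by simp [← hi]), Pi.zero_apply, map_zero,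
    norm_zero, Real.zero_rpow hp]

theorem weakNorm_extend_fin (z : Fin k → E) (hp : p ≠ 0) :
    weakNorm 𝕜 p (Function.extend Fin.val z 0) =
      ⨆ φ : {φ : StrongDual 𝕜 E // ‖φ‖ ≤ 1}, (∑ j, ‖φ.1 (z j)‖ ^ p) ^ (1 / p) := by
  unfold weakNorm
  congr! 3 with φ
  exact tsum_comp_extend_fin z (fun y => ‖φ.1 y‖ ^ p) (by simp [Real.zero_rpow hp])

end FiniteFamilies

section MixedNorm

variable [RCLike 𝕜] [NormedAddCommGroup E] [NormedSpace 𝕜 E] {p q : ℝ} {x : ℕ → E}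

def mixedNorm (q p : ℝ) (x : ℕ → E) (xs : ℕ → StrongDual 𝕜 E) : ℝ :=
  (∑' j, (∑' n, ‖xs n (x j)‖ ^ p) ^ (q / p)) ^ (1 / q)

theorem mixedNorm_nonneg (xs : ℕ → StrongDual 𝕜 E) : 0 ≤ mixedNorm q p x xs := by
  unfold mixedNorm
  positivity

theorem midNorm_nonneg : 0 ≤ midNorm 𝕜 q p x :=
  Real.iSup_nonneg fun xs => mixedNorm_nonneg xs.1

theorem mixedNorm_smul (xs : ℕ → StrongDual 𝕜 E) (a : 𝕜) (hq : q ≠ 0) (hp : p ≠ 0) :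
    mixedNorm q p x (a • xs) = ‖a‖ * mixedNorm q p x xs := by
  have hrow : ∀ j, (∑' n, ‖(a • xs) n (x j)‖ ^ p) ^ (q / p)
      = ‖a‖ ^ q * (∑' n, ‖xs n (x j)‖ ^ p) ^ (q / p) := fun j => by
    simp only [Pi.smul_apply, smul_apply]
    rw [tsum_norm_smul_rpow, Real.mul_rpow (by positivity) (by positivity),
      ← Real.rpow_mul (norm_nonneg a), mul_div_cancel₀ _ hp]
  rw [mixedNorm, tsum_congr hrow, tsum_mul_left, Real.mul_rpow (by positivity) (by positivity),
    one_div, Real.rpow_rpow_inv (norm_nonneg a) hq, mixedNorm, one_div]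

theorem mixedNorm_comp_le_of_injective (hx : MidSummable 𝕜 q p x) (hq : 0 ≤ q) (hp : 0 < p)
    {ys : ℕ → StrongDual 𝕜 E} (hys : WeaklySummable 𝕜 p ys) {e : ℕ → ℕ} (he : e.Injective) :
    mixedNorm q p x (ys ∘ e) ≤ mixedNorm q p x ys := by
  have hrow : ∀ j, (∑' n, ‖ys (e n) (x j)‖ ^ p) ^ (q / p) ≤ (∑' n, ‖ys n (x j)‖ ^ p) ^ (q / p) :=
    fun j => Real.rpow_le_rpow (by positivity)
      (tsum_comp_le_tsum_of_inj (hys.summable_apply (x j)) (fun _ => by positivity) he)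
      (div_nonneg hq hp.le)
  refine Real.rpow_le_rpow (by positivity) (Summable.tsum_le_tsum hrow
    ((hx ys hys).of_nonneg_of_le (fun _ => by positivity) hrow) (hx ys hys)) (by positivity)

def glue (c : ℕ → 𝕜) (u : ℕ → ℕ → E) : ℕ → E :=
  (fun mk : ℕ × ℕ => c mk.1 • u mk.1 mk.2) ∘ Nat.pairEquiv.symm

theorem glue_comp_pair (c : ℕ → 𝕜) (u : ℕ → ℕ → E) (m : ℕ) :
    glue c u ∘ (fun k => Nat.pairEquiv (m, k)) = c m • u m := by
  ext1 k
  simp [glue]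

theorem weaklySummable_glue (hp : 1 ≤ p) {c : ℕ → 𝕜} (hc : Summable fun m => ‖c m‖ ^ p)
    {u : ℕ → ℕ → E} (hu : ∀ m, WeaklySummable 𝕜 p (u m) ∧ weakNorm 𝕜 p (u m) ≤ 1) :
    WeaklySummable 𝕜 p (glue c u) := fun φ => by
  have hp0 : 0 < p := by linarith
  have hrow : ∀ m, ∑' k, ‖φ (u m k)‖ ^ p ≤ ‖φ‖ ^ p := fun m => by
    have h := (tsum_rpow_le_weakNorm_mul hp (hu m).1 φ).trans
      (mul_le_of_le_one_left (norm_nonneg φ) (hu m).2)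
    rwa [← Real.rpow_le_rpow_iff (by positivity) (norm_nonneg φ) hp0, one_div,
      Real.rpow_inv_rpow (tsum_nonneg fun _ => by positivity) hp0.ne'] at h
  refine (Nat.pairEquiv.symm.summable_iff
    (f := fun mk : ℕ × ℕ => ‖φ (c mk.1 • u mk.1 mk.2)‖ ^ p)).mpr
    ((summable_prod_of_nonneg fun _ => by positivity).mpr ⟨fun m => ?_, ?_⟩)
  · simpa only [map_smul, norm_smul, Real.mul_rpow (norm_nonneg _) (norm_nonneg _)]
      using ((hu m).1 φ).mul_left (‖c m‖ ^ p)
  · refine (hc.mul_right (‖φ‖ ^ p)).of_nonneg_of_le (fun _ => by positivity) fun m => ?_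
    simp only [map_smul, tsum_norm_smul_rpow]
    exact mul_le_mul_of_nonneg_left (hrow m) (by positivity)

/-- If the mixed norms were unbounded on the unit ball of `ℓ_p^w(E*)`, gluing sequences `u m` of
mixed norm `> 2^m m` with weights `2^{-m}` would give a weakly `p`-summable sequence of infinite
mixed norm. -/
theorem bddAbove_mixedNorm (hx : MidSummable 𝕜 q p x) (hq : 0 < q) (hp : 1 ≤ p) :
    BddAbove (Set.range fun xs : {xs : ℕ → StrongDual 𝕜 E //
      WeaklySummable 𝕜 p xs ∧ weakNorm 𝕜 p xs ≤ 1} => mixedNorm q p x xs.1) := by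
  have hp0 : 0 < p := by linarith
  by_contra hunbdd
  have hlarge : ∀ m : ℕ, ∃ xs : {xs : ℕ → StrongDual 𝕜 E //
      WeaklySummable 𝕜 p xs ∧ weakNorm 𝕜 p xs ≤ 1}, 2 ^ m * m < mixedNorm q p x xs.1 := fun m => by
    obtain ⟨_, ⟨xs, rfl⟩, h⟩ := not_bddAbove_iff.mp hunbdd (2 ^ m * m)
    exact ⟨xs, h⟩
  choose u hu using hlarge
  let c : ℕ → 𝕜 := fun m => 2⁻¹ ^ m
  have hc : ∀ m, ‖c m‖ = 2⁻¹ ^ m := fun m => by simp [c]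
  have hcsum : Summable fun m => ‖c m‖ ^ p := by
    have h2 : (0 : ℝ) ≤ 2⁻¹ := by norm_num
    have hgeom : ∀ m : ℕ, ‖c m‖ ^ p = (2⁻¹ ^ p) ^ m := fun m => by
      rw [hc, ← Real.rpow_natCast, ← Real.rpow_mul h2, mul_comm, Real.rpow_mul h2,
        Real.rpow_natCast]
    simpa only [hgeom] using
      summable_geometric_of_lt_one (by positivity) (Real.rpow_lt_one h2 (by norm_num) hp0)
  have hG := weaklySummable_glue hp hcsum fun m => (u m).2
  obtain ⟨m, hm⟩ := exists_nat_gt (mixedNorm q p x (glue c fun m => (u m).1))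
  have hinj : (fun k => Nat.pairEquiv (m, k)).Injective :=
    Nat.pairEquiv.injective.comp (Prod.mk_right_injective m)
  have hle := mixedNorm_comp_le_of_injective hx hq.le hp0 hG hinj
  rw [glue_comp_pair, mixedNorm_smul _ _ hq.ne' hp0.ne', hc] at hle
  have : (m : ℝ) < 2⁻¹ ^ m * mixedNorm q p x (u m).1 := by
    rw [inv_pow, lt_inv_mul_iff₀ (by positivity)]
    exact hu m
  linarith

theorem mixedNorm_le_midNorm_mul_weakNorm (hx : MidSummable 𝕜 q p x) (hq : 0 < q) (hp : 1 ≤ p)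
    {xs : ℕ → StrongDual 𝕜 E} (hxs : WeaklySummable 𝕜 p xs) :
    mixedNorm q p x xs ≤ midNorm 𝕜 q p x * weakNorm 𝕜 p xs := by
  have hp0 : p ≠ 0 := by positivity
  refine le_mul_of_forall_lt₀ fun M hM c hc => ?_
  have hc0 : 0 < c := (weakNorm_nonneg xs).trans_lt hc
  have hnorm : ‖((c⁻¹ : ℝ) : 𝕜)‖ = c⁻¹ := by simp [hc0.le]
  have hscaled : mixedNorm q p x (((c⁻¹ : ℝ) : 𝕜) • xs) ≤ midNorm 𝕜 q p x := by
    refine le_ciSup (bddAbove_mixedNorm hx hq hp) ⟨_, hxs.smul _, ?_⟩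
    rw [weakNorm_smul _ _ hp0, hnorm, inv_mul_le_one₀ hc0]
    exact hc.le
  rw [mixedNorm_smul _ _ hq.ne' hp0, hnorm, inv_mul_le_iff₀ hc0, mul_comm] at hscaled
  exact hscaled.trans (mul_le_mul_of_nonneg_right hM.le hc0.le)

theorem MidSummable.summable_fin (hx : MidSummable 𝕜 q p x) (hp : p ≠ 0) {k : ℕ}
    (z : Fin k → StrongDual 𝕜 E) : Summable fun j => (∑ i, ‖z i (x j)‖ ^ p) ^ (q / p) := by
  refine (hx _ (weaklySummable_extend_fin z hp)).congr fun j => ?_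
  rw [tsum_comp_extend_fin z (fun φ => ‖φ (x j)‖ ^ p) (by simp [Real.zero_rpow hp])]

theorem MidSummable.summable_rpow (hx : MidSummable 𝕜 q p x) (hp : p ≠ 0)
    (φ : StrongDual 𝕜 E) : Summable fun j => ‖φ (x j)‖ ^ q := by
  refine (hx.summable_fin hp fun _ : Fin 1 => φ).congr fun j => ?_
  rw [Fin.sum_univ_one, ← Real.rpow_mul (norm_nonneg _), mul_div_cancel₀ _ hp]

theorem sum_norm_rpow_le_midNorm_mul (hx : MidSummable 𝕜 q p x) (hq : 0 < q) (hqp : q ≤ p)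
    (hp : 1 ≤ p) [Fact (1 ≤ ENNReal.ofReal q)]
    (Ψ : StrongDual 𝕜 E →L[𝕜] lp (fun _ : ℕ => 𝕜) (ENNReal.ofReal q))
    (hΨ : ∀ (φ : StrongDual 𝕜 E) (j : ℕ), (Ψ φ : ∀ _ : ℕ, 𝕜) j = φ (x j)) {k : ℕ}
    (z : Fin k → StrongDual 𝕜 E) :
    (∑ i, ‖Ψ (z i)‖ ^ p) ^ (1 / p) ≤ midNorm 𝕜 q p x *
      ⨆ φ : {φ : StrongDual 𝕜 (StrongDual 𝕜 E) // ‖φ‖ ≤ 1}, (∑ i, ‖φ.1 (z i)‖ ^ p) ^ (1 / p) := by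
  have hp0 : p ≠ 0 := by positivity
  have htoReal : (ENNReal.ofReal q).toReal = q := ENNReal.toReal_ofReal hq.le
  have hnormΨ : ∀ φ, ‖Ψ φ‖ ^ p = (∑' j, ‖φ (x j)‖ ^ q) ^ (p / q) := fun φ => by
    rw [lp.norm_eq_tsum_rpow (by rw [htoReal]; exact hq), htoReal, ← Real.rpow_mul
      (tsum_nonneg fun _ => by positivity), one_div_mul_eq_div]
    simp only [hΨ]
  have hpad : mixedNorm q p x (Function.extend Fin.val z 0)
      = (∑' j, (∑ i, ‖z i (x j)‖ ^ p) ^ (q / p)) ^ (1 / q) := by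
    refine congrArg (· ^ (1 / q)) (tsum_congr fun j => congrArg (· ^ (q / p)) ?_)
    exact tsum_comp_extend_fin z (fun φ => ‖φ (x j)‖ ^ p) (by simp [Real.zero_rpow hp0])
  calc (∑ i, ‖Ψ (z i)‖ ^ p) ^ (1 / p)
      = (∑ i, (∑' j, ‖z i (x j)‖ ^ q) ^ (p / q)) ^ (1 / p) := by simp only [hnormΨ]
    _ ≤ (∑' j, (∑ i, ‖z i (x j)‖ ^ p) ^ (q / p)) ^ (1 / q) :=
        Lp_Lq_le_Lq_Lp hq hqp _ (fun _ _ => norm_nonneg _) (hx.summable_fin hp0 z)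
    _ ≤ midNorm 𝕜 q p x * weakNorm 𝕜 p (Function.extend Fin.val z 0) :=
        hpad ▸ mixedNorm_le_midNorm_mul_weakNorm hx hq hp (weaklySummable_extend_fin z hp0)
    _ = _ := by rw [weakNorm_extend_fin z hp0]

end MixedNorm

theorem stmt6_general [RCLike 𝕜] [NormedAddCommGroup E] [NormedSpace 𝕜 E]
    (p q : ℝ) (hq : 1 ≤ q) (hqp : q ≤ p) [Fact (1 ≤ ENNReal.ofReal q)]
    (x : ℕ → E) (hx : MidSummable 𝕜 q p x) :
    ∃ Ψ : StrongDual 𝕜 E →L[𝕜] lp (fun _ : ℕ => 𝕜) (ENNReal.ofReal q),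
      (∀ (φ : StrongDual 𝕜 E) (j : ℕ), (Ψ φ : ∀ _ : ℕ, 𝕜) j = φ (x j)) ∧
      AbsolutelySumming 𝕜 p Ψ ∧ piNorm 𝕜 p Ψ ≤ midNorm 𝕜 q p x := by
  have hq0 : 0 < q := by linarith
  have hp : 1 ≤ p := hq.trans hqp
  obtain ⟨Ψ, hΨ⟩ := exists_clm_lp_of_memℓp (r := ENNReal.ofReal q)
    (fun j => ContinuousLinearMap.apply 𝕜 𝕜 (x j)) fun φ => memℓp_gen <| by
      simpa [ENNReal.toReal_ofReal hq0.le] using hx.summable_rpow (by positivity) φ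
  have hbound : ∀ C, midNorm 𝕜 q p x ≤ C → ∀ (k : ℕ) (z : Fin k → StrongDual 𝕜 E),
      (∑ i, ‖Ψ (z i)‖ ^ p) ^ (1 / p) ≤ C *
        ⨆ φ : {φ : StrongDual 𝕜 (StrongDual 𝕜 E) // ‖φ‖ ≤ 1}, (∑ i, ‖φ.1 (z i)‖ ^ p) ^ (1 / p) :=
    fun C hC k z => (sum_norm_rpow_le_midNorm_mul hx hq0 hqp hp Ψ hΨ z).trans <|
      mul_le_mul_of_nonneg_right hC <| Real.iSup_nonneg fun _ => by positivity
  have hM : 0 ≤ midNorm 𝕜 q p x := midNorm_nonneg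
  refine ⟨Ψ, hΨ, ⟨midNorm 𝕜 q p x + 1, by linarith, hbound _ (by linarith)⟩,
    le_of_forall_pos_le_add fun ε hε => ?_⟩
  exact csInf_le ⟨0, fun C hC => hC.1.le⟩ ⟨by linarith, hbound _ (by linarith)⟩

/-- if `1 ≤ q ≤ p` and `x` is mid `(q,p)`-summable then the operator
`Ψ_x : E* → ℓ_q`, `Ψ_x(x^*) = (x^*(x_j))_j`, is absolutely `p`-summing with
`π_p(Ψ_x) ≤ ‖(x_j)‖_{q,p}`. -/
theorem stmt6 [RCLike 𝕜] [NormedAddCommGroup E] [NormedSpace 𝕜 E] [CompleteSpace E]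
    (p q : ℝ) (hq : 1 ≤ q) (hqp : q ≤ p) [Fact (1 ≤ ENNReal.ofReal q)]
    (x : ℕ → E) (hx : MidSummable 𝕜 q p x) :
    ∃ Ψ : StrongDual 𝕜 E →L[𝕜] lp (fun _ : ℕ => 𝕜) (ENNReal.ofReal q),
      (∀ (φ : StrongDual 𝕜 E) (j : ℕ), (Ψ φ : ∀ _ : ℕ, 𝕜) j = φ (x j)) ∧
      AbsolutelySumming 𝕜 p Ψ ∧ piNorm 𝕜 p Ψ ≤ midNorm 𝕜 q p x :=
  stmt6_general p q hq hqp x hx
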